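/- If 0 < q ≤ (1 - 2^{1/3} + 4^{1/3})/3 and f is a solution of Schilling's problem which is bounded in a neighbourhood of at least one point of the set {ε·∑_{i=1}^{n} qⁱ : n ∈ ℕ ∪ {0, +∞}, ε ∈ {-1,1}} (where the n = +∞ point is ε·q/(1-q)), then f is identically zero. -/

import Mathlib

/-!
Write `Q = q / (1 - q)`, the fixed point of `x ↦ q x + q`. Near the partial sums `∑ qⁱ` and near
`Q` the equation reads `f x = 4 q f (q x + q)`, which carries boundedness down the partial sums to
`0`; on `|x| < 1 - Q` it reads `f x = 2 q f (q x)`, and as `2 q < 1` iteration forces `f = 0` there.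
For `t < 1`, `f (Q - t)` and `f (Q - q t)` vanish together, so `f (Q - t) = 0` on every zone
`q ^ k (2 Q - 1) < t < q ^ k`. Every other `t` is a rescaling of a point of `[q, 2 Q - 1]`, where
the equation gives `f (Q - 1 - t) = -2 f (Q - t)`, relating the two ends of the support. Since
solutions are invariant under `x ↦ -x`, alternating these relations with rescalings leads every
such point into a zone within two steps, provided `q³ + 2 q < 1`.
-/

open Filter Topology Set Finset

structure IsSchillingSolution (q : ℝ) (f : ℝ → ℝ) : Prop where
  functional_eq : ∀ x, 4 * q * f (q * x) = f (x - 1) + f (x + 1) + 2 * f x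
  eq_zero_of_lt_abs : ∀ x, q / (1 - q) < |x| → f x = 0

section Parameter

variable {q : ℝ}

local notation "Q" => q / (1 - q)

theorem mul_div_one_sub_add_self (hq : q ≠ 1) : q * Q + q = Q := by
  have : 1 - q ≠ 0 := sub_ne_zero.mpr hq.symm
  field_simp
  ring

theorem div_one_sub_lt_one (hq : q < 1 / 2) : Q < 1 := by
  rw [div_lt_one (by linarith)]
  linarith

theorem lt_half_of_cube_add_lt_one (hq : q ^ 3 + 2 * q < 1) : q < 1 / 2 := by
  nlinarith [sq_nonneg q, sq_nonneg (q - 1 / 2)]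

theorem two_mul_div_one_sub_lt (hq : q ^ 3 + 2 * q < 1) : 2 * Q < 1 + q + q ^ 2 := by
  have hq2 := lt_half_of_cube_add_lt_one hq
  rw [mul_div_assoc', div_lt_iff₀ (by linarith)]
  nlinarith

/-- `(1 - ∛2 + ∛4) / 3 = 1 / (1 + ∛2)`, so the hypothesis says `2 q³ ≤ (1 - q)³`. -/
theorem cube_add_lt_one_of_le (hq : 0 < q)
    (h : q ≤ (1 - (2 : ℝ) ^ ((1 : ℝ) / 3) + (4 : ℝ) ^ ((1 : ℝ) / 3)) / 3) :
    q ^ 3 + 2 * q < 1 := by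
  set a : ℝ := (2 : ℝ) ^ ((1 : ℝ) / 3)
  have ha : 0 < a := by positivity
  have ha3 : a ^ 3 = 2 := by
    rw [← Real.rpow_natCast, ← Real.rpow_mul (by norm_num)]
    norm_num
  have ha2 : (4 : ℝ) ^ ((1 : ℝ) / 3) = a ^ 2 := by
    rw [← Real.rpow_natCast, ← Real.rpow_mul (by norm_num),
      show (4 : ℝ) = 2 ^ (2 : ℝ) by norm_num, ← Real.rpow_mul (by norm_num)]
    norm_num
  rw [ha2] at h
  have hqa : q * a ≤ 1 - q := by nlinarith
  have hcube : 2 * q ^ 3 ≤ (1 - q) ^ 3 := by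
    calc 2 * q ^ 3 = (q * a) ^ 3 := by rw [mul_pow, ha3]; ring
      _ ≤ (1 - q) ^ 3 := pow_le_pow_left₀ (by positivity) hqa 3
  nlinarith [sq_nonneg q, sq_nonneg (q - 1 / 2)]

theorem sum_Icc_one_pow_eq (hq : q ≠ 1) (n : ℕ) : ∑ i ∈ Icc 1 n, q ^ i = Q - q ^ n * Q := by
  induction n with
  | zero => simp
  | succ n ih =>
    rw [Finset.sum_Icc_succ_top (by omega : 1 ≤ n + 1), ih]
    linear_combination q ^ n * mul_div_one_sub_add_self hq

theorem exists_pow_mul_eq (hq : 0 < q) (hq1 : q < 1) {t : ℝ} (ht : 0 < t) (ht1 : t < 1) :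
    ∃ k : ℕ, ∃ m, q ≤ m ∧ m < 1 ∧ q ^ k * m = t := by
  obtain ⟨k, hk, hk'⟩ := exists_nat_pow_near_of_lt_one ht ht1.le hq hq1
  have hqk : 0 < q ^ k := by positivity
  rcases hk'.lt_or_eq with hlt | rfl
  · refine ⟨k, t / q ^ k, ?_, (div_lt_one hqk).2 hlt, mul_div_cancel₀ _ hqk.ne'⟩
    rw [le_div_iff₀ hqk, mul_comm, ← pow_succ]
    exact hk.le
  · obtain ⟨j, rfl⟩ : ∃ j, k = j + 1 := Nat.exists_eq_succ_of_ne_zero (by rintro rfl; simp at ht1)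
    exact ⟨j, q, le_rfl, hq1, (pow_succ q j).symm⟩

end Parameter

namespace IsSchillingSolution

variable {q : ℝ} {f : ℝ → ℝ}

local notation "Q" => q / (1 - q)

theorem comp_neg (hf : IsSchillingSolution q f) : IsSchillingSolution q (fun x => f (-x)) where
  functional_eq x := by
    have h := hf.functional_eq (-x)
    rw [mul_neg, show -x - 1 = -(x + 1) by ring, show -x + 1 = -(x - 1) by ring] at h
    linarith
  eq_zero_of_lt_abs x hx := hf.eq_zero_of_lt_abs _ (by rwa [abs_neg])

theorem eq_zero_of_lt (hf : IsSchillingSolution q f) {x : ℝ} (hx : Q < x) : f x = 0 :=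
  hf.eq_zero_of_lt_abs x (hx.trans_le (le_abs_self x))

theorem eq_mul_apply_mul_add (hf : IsSchillingSolution q f) {x : ℝ} (hx : Q - 1 < x) :
    f x = 4 * q * f (q * x + q) := by
  have h := hf.functional_eq (x + 1)
  rw [hf.eq_zero_of_lt (by linarith : Q < x + 1), hf.eq_zero_of_lt (by linarith : Q < x + 1 + 1),
    add_sub_cancel_right, mul_add, mul_one] at h
  linarith

theorem isBoundedUnder_of_mul_add (hf : IsSchillingSolution q f) {p : ℝ} (hp : Q - 1 < p)
    (hb : (𝓝 (q * p + q)).IsBoundedUnder (· ≤ ·) (norm ∘ f)) :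
    (𝓝 p).IsBoundedUnder (· ≤ ·) (norm ∘ f) := by
  obtain ⟨M, hM⟩ := hb.eventually_le
  have hT := (by fun_prop : Continuous fun x : ℝ => q * x + q).tendsto p
  refine isBoundedUnder_of_eventually_le (a := ‖4 * q‖ * M) ?_
  filter_upwards [hT.eventually hM, eventually_gt_nhds hp] with x hxM hx
  rw [Function.comp_apply, hf.eq_mul_apply_mul_add hx, norm_mul]
  exact mul_le_mul_of_nonneg_left hxM (norm_nonneg _)

theorem isBoundedUnder_nhds_zero_of_sum (hf : IsSchillingSolution q f) (hq : 0 < q)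
    (hq2 : q < 1 / 2) (n : ℕ)
    (hb : (𝓝 (∑ i ∈ Icc 1 n, q ^ i)).IsBoundedUnder (· ≤ ·) (norm ∘ f)) :
    (𝓝 0).IsBoundedUnder (· ≤ ·) (norm ∘ f) := by
  induction n with
  | zero => simpa using hb
  | succ n ih =>
    refine ih (hf.isBoundedUnder_of_mul_add ?_ ?_)
    · have hQ1 := div_one_sub_lt_one hq2
      have hs : 0 ≤ ∑ i ∈ Icc 1 n, q ^ i := by positivity
      linarith
    · convert hb using 2
      rw [sum_Icc_one_pow_eq (by linarith), sum_Icc_one_pow_eq (by linarith)]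
      linear_combination mul_div_one_sub_add_self (by linarith : q ≠ 1)

theorem isBoundedUnder_nhds_zero_of_div (hf : IsSchillingSolution q f) (hq : 0 < q)
    (hq2 : q < 1 / 2) (hb : (𝓝 Q).IsBoundedUnder (· ≤ ·) (norm ∘ f)) :
    (𝓝 0).IsBoundedUnder (· ≤ ·) (norm ∘ f) := by
  obtain ⟨M, hM⟩ := hb.eventually_le
  have hsum : Tendsto (fun n => ∑ i ∈ Icc 1 n, q ^ i) atTop (𝓝 Q) := by
    simp_rw [sum_Icc_one_pow_eq (by linarith : q ≠ 1)]
    simpa using tendsto_const_nhds.sub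
      ((tendsto_pow_atTop_nhds_zero_of_lt_one hq.le (by linarith)).mul_const Q)
  obtain ⟨n, hn⟩ := (hsum.eventually hM.eventually_nhds).exists
  exact hf.isBoundedUnder_nhds_zero_of_sum hq hq2 n (isBoundedUnder_of_eventually_le hn)

theorem eq_zero_of_abs_lt (hf : IsSchillingSolution q f) (hq : 0 < q) (hq2 : q < 1 / 2)
    (hb : (𝓝 0).IsBoundedUnder (· ≤ ·) (norm ∘ f)) {x : ℝ} (hx : |x| < 1 - Q) : f x = 0 := by
  have hstep : ∀ y, |y| < 1 - Q → f y = 2 * q * f (q * y) := by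
    intro y hy
    have hQ0 : 0 < Q := div_pos hq (by linarith)
    have h := hf.functional_eq y
    rw [abs_lt] at hy
    rw [hf.eq_zero_of_lt_abs (y - 1) (by rw [abs_of_neg (by linarith)]; linarith),
      hf.eq_zero_of_lt_abs (y + 1) (by rw [abs_of_pos (by linarith)]; linarith)] at h
    linarith
  have hiter : ∀ n : ℕ, f x = (2 * q) ^ n * f (q ^ n * x) := by
    intro n
    induction n with
    | zero => simp
    | succ n ih =>
      have hn : |q ^ n * x| < 1 - Q := by
        rw [abs_mul, abs_of_pos (by positivity)]
        exact (mul_le_of_le_one_left (abs_nonneg x) (pow_le_one₀ hq.le (by linarith))).trans_lt hx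
      rw [ih, hstep _ hn, pow_succ, pow_succ', mul_assoc q]
      ring
  have hlim : Tendsto (fun n : ℕ => (2 * q) ^ n * f (q ^ n * x)) atTop (𝓝 0) := by
    refine (tendsto_pow_atTop_nhds_zero_of_lt_one (by positivity)
      (by linarith)).zero_mul_isBoundedUnder_le ?_
    have h0 : Tendsto (fun n : ℕ => q ^ n * x) atTop (𝓝 0) := by
      simpa using (tendsto_pow_atTop_nhds_zero_of_lt_one hq.le (by linarith)).mul_const x
    exact h0.isBoundedUnder_comp hb
  simp_rw [← hiter] at hlim
  exact tendsto_nhds_unique tendsto_const_nhds hlim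

theorem eq_zero_of_abs_lt_of_isBoundedUnder (hf : IsSchillingSolution q f) (hq : 0 < q)
    (hq2 : q < 1 / 2) {p : ℝ} (hp : (∃ n : ℕ, p = ∑ i ∈ Icc 1 n, q ^ i) ∨ p = Q)
    (hb : (𝓝 p).IsBoundedUnder (· ≤ ·) (norm ∘ f)) {x : ℝ} (hx : |x| < 1 - Q) : f x = 0 := by
  refine hf.eq_zero_of_abs_lt hq hq2 ?_ hx
  rcases hp with ⟨n, rfl⟩ | rfl
  · exact hf.isBoundedUnder_nhds_zero_of_sum hq hq2 n hb
  · exact hf.isBoundedUnder_nhds_zero_of_div hq hq2 hb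

theorem apply_div_eq_zero (hf : IsSchillingSolution q f) (hq2 : q < 1 / 2)
    (h0 : ∀ x, |x| < 1 - Q → f x = 0) : f Q = 0 := by
  have h := hf.eq_mul_apply_mul_add (x := Q) (by linarith)
  rw [mul_div_one_sub_add_self (by linarith)] at h
  by_cases h4 : 4 * q = 1
  · apply h0
    rw [show q = 1 / 4 by linarith]
    norm_num
  · have : (1 - 4 * q) * f Q = 0 := by linarith
    exact (mul_eq_zero.1 this).resolve_left (sub_ne_zero.2 (Ne.symm h4))

theorem apply_sub_pow_mul_eq_zero_iff (hf : IsSchillingSolution q f) (hq : 0 < q) (hq1 : q < 1)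
    (k : ℕ) {t : ℝ} (ht : t < 1) : f (Q - q ^ k * t) = 0 ↔ f (Q - t) = 0 := by
  induction k generalizing t with
  | zero => simp
  | succ k ih =>
    have hqt : q * t < 1 := by rcases le_or_gt t 0 with h | h <;> nlinarith
    have hstep : f (Q - t) = 4 * q * f (Q - q * t) := by
      rw [hf.eq_mul_apply_mul_add (by linarith : Q - 1 < Q - t)]
      congr 2
      linear_combination mul_div_one_sub_add_self hq1.ne
    rw [pow_succ, mul_assoc, ih hqt, hstep]
    simp [hq.ne']

theorem apply_sub_eq_zero_of_mem_zone (hf : IsSchillingSolution q f) (hq : 0 < q) (hq1 : q < 1)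
    (h0 : ∀ x, |x| < 1 - Q → f x = 0) (k : ℕ) {t : ℝ} (ht : q ^ k * (2 * Q - 1) < t)
    (ht' : t < q ^ k) : f (Q - t) = 0 := by
  have hk : 0 < q ^ k := by positivity
  have h1 : t / q ^ k < 1 := (div_lt_one hk).2 ht'
  have h2 : 2 * Q - 1 < t / q ^ k := (lt_div_iff₀' hk).2 ht
  rw [← mul_div_cancel₀ t hk.ne', hf.apply_sub_pow_mul_eq_zero_iff hq hq1 k h1]
  exact h0 _ (abs_lt.2 ⟨by linarith, by linarith⟩)

theorem apply_sub_one_sub_eq (hf : IsSchillingSolution q f) (hq : 0 < q)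
    (hq3 : q ^ 3 + 2 * q < 1) (h0 : ∀ x, |x| < 1 - Q → f x = 0) {t : ℝ} (ht : q ≤ t)
    (ht' : t ≤ 2 * Q - 1) : f (Q - 1 - t) = -2 * f (Q - t) := by
  have hq2 := lt_half_of_cube_add_lt_one hq3
  have hQ1 := div_one_sub_lt_one hq2
  have h2Q := two_mul_div_one_sub_lt hq3
  have h := hf.functional_eq (Q - t)
  rw [show q * (Q - t) = Q - (q + q * t) by
      linear_combination mul_div_one_sub_add_self (by linarith : q ≠ 1),
    h0 _ (abs_lt.2 ⟨by nlinarith, by nlinarith⟩), hf.eq_zero_of_lt (by linarith : Q < Q - t + 1),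
    show Q - t - 1 = Q - 1 - t by ring] at h
  linarith

theorem three_mul_apply_sub_add (hf : IsSchillingSolution q f) (hq : 0 < q)
    (hq3 : q ^ 3 + 2 * q < 1) (h0 : ∀ x, |x| < 1 - Q → f x = 0) {w : ℝ} (hw : 0 ≤ w)
    (hw' : w ≤ 2 * Q - 1 - q) : 3 * f (Q - w) + 4 * q * f (Q - 1 - q - q * w) = 0 := by
  have hq2 := lt_half_of_cube_add_lt_one hq3
  have hQ1 := div_one_sub_lt_one hq2
  have hrefl := hf.comp_neg.apply_sub_one_sub_eq hq hq3 (fun x hx => h0 _ ((abs_neg x).trans_lt hx))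
    (t := 2 * Q - 1 - w) (by linarith) (by linarith)
  have hgap := hf.apply_sub_one_sub_eq hq hq3 h0 (t := q + q * w) (by nlinarith) (by nlinarith)
  have h := hf.functional_eq (Q - w)
  beta_reduce at hrefl
  rw [show -(Q - 1 - (2 * Q - 1 - w)) = Q - w by ring,
    show -(Q - (2 * Q - 1 - w)) = Q - w - 1 by ring] at hrefl
  rw [show q * (Q - w) = Q - (q + q * w) by
      linear_combination mul_div_one_sub_add_self (by linarith : q ≠ 1),
    hf.eq_zero_of_lt (by linarith : Q < Q - w + 1)] at h
  rw [show Q - 1 - (q + q * w) = Q - 1 - q - q * w by ring] at hgap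
  linear_combination 4 * q * hgap - 2 * h - hrefl

/-- With `L = 2 Q - 1 - q`: rescaling `s` by `q ^ r` and then applying `three_mul_apply_sub_add`
moves `s` to `L - q ^ (r + 1) s`, which approaches `L` from below. -/
theorem apply_sub_eq_zero_of_germ (hf : IsSchillingSolution q f) (hq : 0 < q)
    (hq3 : q ^ 3 + 2 * q < 1) (h0 : ∀ x, |x| < 1 - Q → f x = 0) {ε : ℝ} (hε : 0 < ε)
    (hgerm : ∀ y ∈ Ioo (2 * Q - 1 - q - ε) (2 * Q - 1 - q), f (y - Q) = 0)
    {s : ℝ} (hs : s ∈ Ioc 0 (2 * Q - 1 - q)) : f (Q - s) = 0 := by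
  obtain ⟨hs0, hsL⟩ := hs
  have hq2 := lt_half_of_cube_add_lt_one hq3
  have hQ1 := div_one_sub_lt_one hq2
  obtain ⟨r, hr⟩ := exists_pow_lt_of_lt_one hε (by linarith : q < 1)
  have hqr : 0 < q ^ r := by positivity
  have hw : q ^ r * s ≤ s := mul_le_of_le_one_left hs0.le (pow_le_one₀ hq.le (by linarith))
  have hqw : 0 < q * (q ^ r * s) := by positivity
  have hqwε : q * (q ^ r * s) < ε :=
    calc q * (q ^ r * s) = q ^ r * (q * s) := by ring
      _ < q ^ r * 1 := mul_lt_mul_of_pos_left (by nlinarith) hqr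
      _ < ε := by linarith
  have hchain := hf.three_mul_apply_sub_add hq hq3 h0 (w := q ^ r * s) (by positivity)
    (by linarith)
  have hy := hgerm (2 * Q - 1 - q - q * (q ^ r * s)) ⟨by linarith, by linarith⟩
  rw [show 2 * Q - 1 - q - q * (q ^ r * s) - Q = Q - 1 - q - q * (q ^ r * s) by ring] at hy
  rw [hy, mul_zero, add_zero] at hchain
  rw [← hf.apply_sub_pow_mul_eq_zero_iff hq (by linarith) r (by linarith)]
  linarith

theorem exists_germ_of_mem_zone (hf : IsSchillingSolution q f) (hq : 0 < q) (hq1 : q < 1)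
    (h0 : ∀ x, |x| < 1 - Q → f x = 0) {j : ℕ} (hj : q ^ j * (2 * Q - 1) < 2 * Q - 1 - q)
    (hj' : 2 * Q - 1 - q ≤ q ^ j) :
    ∃ ε > 0, ∀ y ∈ Ioo (2 * Q - 1 - q - ε) (2 * Q - 1 - q), f (y - Q) = 0 := by
  refine ⟨_, sub_pos.2 hj, fun y hy => ?_⟩
  simpa using hf.comp_neg.apply_sub_eq_zero_of_mem_zone hq hq1
    (fun x hx => h0 _ ((abs_neg x).trans_lt hx)) j (t := y) (by linarith [hy.1])
    (by linarith [hy.2])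

/-- Here `L` falls between two zones; one more step of `three_mul_apply_sub_add` maps a left
neighbourhood of `L` onto a right neighbourhood of `(1 - q) L`, which lies in zone `j + 1`. -/
theorem exists_germ_of_mem_gap (hf : IsSchillingSolution q f) (hq : 0 < q)
    (hq3 : q ^ 3 + 2 * q < 1) (h0 : ∀ x, |x| < 1 - Q → f x = 0) {j : ℕ}
    (hj : q ^ (j + 1) < 2 * Q - 1 - q) (hj' : 2 * Q - 1 - q ≤ q ^ j * (2 * Q - 1))
    (hQq : 2 * Q - 1 ≤ 1 - q) :
    ∃ ε > 0, ∀ y ∈ Ioo (2 * Q - 1 - q - ε) (2 * Q - 1 - q), f (y - Q) = 0 := by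
  set L := 2 * Q - 1 - q with hL
  have hq2 := lt_half_of_cube_add_lt_one hq3
  have hfix := mul_div_one_sub_add_self (by linarith : q ≠ 1)
  have hqj : 0 < q ^ j := by positivity
  have hroom : 0 < q ^ (j + 1) - L * (1 - q) := by
    have hid : (2 * Q - 1) * (1 - q) = 3 * q - 1 := by linear_combination (-2) * hfix
    have : L * (1 - q) ≤ q ^ j * (3 * q - 1) := by
      rw [← hid, ← mul_assoc]
      exact mul_le_mul_of_nonneg_right hj' (by linarith)
    rw [pow_succ]
    nlinarith
  refine ⟨min L ((q ^ (j + 1) - L * (1 - q)) / q), lt_min ((pow_pos hq _).trans hj) (by positivity),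
    fun y hy => ?_⟩
  obtain ⟨hy1, hy2⟩ := hy
  have hεL := min_le_left L ((q ^ (j + 1) - L * (1 - q)) / q)
  have hεR := (le_div_iff₀ hq).1 (min_le_right L ((q ^ (j + 1) - L * (1 - q)) / q))
  have hchain := hf.comp_neg.three_mul_apply_sub_add hq hq3
    (fun x hx => h0 _ ((abs_neg x).trans_lt hx)) (w := y) (by linarith) hy2.le
  have hzone := hf.apply_sub_eq_zero_of_mem_zone hq (by linarith) h0 (j + 1) (t := L - q * y)
    (by rw [pow_succ] at hj ⊢; nlinarith) (by nlinarith)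
  beta_reduce at hchain
  rw [show -(Q - 1 - q - q * y) = Q - (L - q * y) by rw [hL]; ring, hzone,
    show -(Q - y) = y - Q by ring] at hchain
  linarith

theorem apply_sub_eq_zero_of_mem_Ioc (hf : IsSchillingSolution q f) (hq : 0 < q)
    (hq3 : q ^ 3 + 2 * q < 1) (h0 : ∀ x, |x| < 1 - Q → f x = 0) {s : ℝ}
    (hs : s ∈ Ioc 0 (2 * Q - 1 - q)) : f (Q - s) = 0 := by
  have hq2 := lt_half_of_cube_add_lt_one hq3
  have hQ1 := div_one_sub_lt_one hq2
  have hfix := mul_div_one_sub_add_self (by linarith : q ≠ 1)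
  have h2Q := two_mul_div_one_sub_lt hq3
  have hL : 0 < 2 * Q - 1 - q := hs.1.trans_le hs.2
  suffices ∃ ε > 0, ∀ y ∈ Ioo (2 * Q - 1 - q - ε) (2 * Q - 1 - q), f (y - Q) = 0 by
    obtain ⟨ε, hε, hgerm⟩ := this
    exact hf.apply_sub_eq_zero_of_germ hq hq3 h0 hε hgerm hs
  by_cases hgap : 2 * Q - 1 ≤ 1 - q
  · obtain ⟨j, hj, hj'⟩ := exists_nat_pow_near_of_lt_one hL (by linarith) hq (by linarith)
    rcases lt_or_ge (q ^ j * (2 * Q - 1)) (2 * Q - 1 - q) with hA | hB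
    · exact hf.exists_germ_of_mem_zone hq (by linarith) h0 hA hj'
    · exact hf.exists_germ_of_mem_gap hq hq3 h0 hj hB hgap
  · have hquad : q ^ 2 - 5 * q + 2 < 0 := by
      have hid : (2 * Q - 1 - (1 - q)) * (1 - q) = -(q ^ 2 - 5 * q + 2) := by
        linear_combination (-2) * hfix
      nlinarith
    have hid : (2 * Q - 1 - q) - q ^ 2 * (2 * Q - 1) = 3 * q ^ 2 + q - 1 := by
      linear_combination (-2 - 2 * q) * hfix
    refine hf.exists_germ_of_mem_zone hq (by linarith) h0 (j := 2) ?_ (by linarith)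
    nlinarith [sq_nonneg (q - 7 / 16)]

theorem eq_zero_of_sub_one_lt (hf : IsSchillingSolution q f) (hq : 0 < q)
    (hq3 : q ^ 3 + 2 * q < 1) (h0 : ∀ x, |x| < 1 - Q → f x = 0) {x : ℝ} (hx : Q - 1 < x) :
    f x = 0 := by
  have hq2 := lt_half_of_cube_add_lt_one hq3
  have h0' : ∀ x, |x| < 1 - Q → f (-x) = 0 := fun x hx => h0 _ ((abs_neg x).trans_lt hx)
  rcases lt_or_ge Q x with hxQ | hxQ
  · exact hf.eq_zero_of_lt hxQ
  obtain ⟨t, rfl⟩ : ∃ t, x = Q - t := ⟨Q - x, by ring⟩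
  rcases (show 0 ≤ t by linarith).eq_or_lt with rfl | ht0
  · simpa using hf.apply_div_eq_zero hq2 h0
  obtain ⟨k, m, hqm, hm1, rfl⟩ := exists_pow_mul_eq hq (by linarith) ht0 (by linarith)
  rw [hf.apply_sub_pow_mul_eq_zero_iff hq (by linarith) k hm1]
  rcases le_or_gt m (2 * Q - 1) with hm | hm
  · have hgap := hf.apply_sub_one_sub_eq hq hq3 h0 hqm hm
    have hrefl : f (Q - 1 - m) = 0 := by
      rcases hm.eq_or_lt with rfl | hlt
      · simpa [show Q - 1 - (2 * Q - 1) = -Q by ring] using hf.comp_neg.apply_div_eq_zero hq2 h0'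
      · simpa [show Q - (2 * Q - 1 - m) = -(Q - 1 - m) by ring] using
          hf.comp_neg.apply_sub_eq_zero_of_mem_Ioc hq hq3 h0' (s := 2 * Q - 1 - m)
            ⟨by linarith, by linarith⟩
    linarith
  · exact h0 _ (abs_lt.2 ⟨by linarith, by linarith⟩)

end IsSchillingSolution

theorem schilling_main (q : ℝ) (hq : 0 < q)
    (hq1 : q ≤ (1 - (2 : ℝ) ^ ((1 : ℝ) / 3) + (4 : ℝ) ^ ((1 : ℝ) / 3)) / 3)
    (f : ℝ → ℝ)
    (heq : ∀ x : ℝ, f (q * x) = 1 / (4 * q) * (f (x - 1) + f (x + 1) + 2 * f x))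
    (hQ : ∀ x : ℝ, |x| > q / (1 - q) → f x = 0)
    (hbdd : ∃ p : ℝ, (∃ ε : ℝ, (ε = -1 ∨ ε = 1) ∧
        ((∃ n : ℕ, p = ε * ∑ i ∈ Finset.Icc 1 n, q ^ i) ∨ p = ε * (q / (1 - q)))) ∧
      ∃ δ > 0, ∃ M : ℝ, ∀ x : ℝ, |x - p| < δ → |f x| ≤ M) :
    ∀ x : ℝ, f x = 0 := by
  have hq3 := cube_add_lt_one_of_le hq hq1
  have hq2 := lt_half_of_cube_add_lt_one hq3
  have hf : IsSchillingSolution q f := ⟨fun x => by rw [heq x]; field_simp, hQ⟩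
  obtain ⟨p, ⟨ε, hε, hp⟩, δ, hδ, M, hM⟩ := hbdd
  obtain ⟨s, hs, rfl⟩ : ∃ s, ((∃ n : ℕ, s = ∑ i ∈ Icc 1 n, q ^ i) ∨ s = q / (1 - q)) ∧
      p = ε * s := by
    rcases hp with ⟨n, rfl⟩ | rfl
    exacts [⟨_, Or.inl ⟨n, rfl⟩, rfl⟩, ⟨_, Or.inr rfl, rfl⟩]
  have hb : (𝓝 (ε * s)).IsBoundedUnder (· ≤ ·) (norm ∘ f) :=
    isBoundedUnder_of_eventually_le (Metric.eventually_nhds_iff.2 ⟨δ, hδ, fun x hx => hM x hx⟩)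
  have h0 : ∀ x, |x| < 1 - q / (1 - q) → f x = 0 := by
    rcases hε with rfl | rfl
    · intro x hx
      simpa using hf.comp_neg.eq_zero_of_abs_lt_of_isBoundedUnder hq hq2 hs
        ((tendsto_neg s).isBoundedUnder_comp (by simpa using hb)) (x := -x) (by rwa [abs_neg])
    · exact fun x => hf.eq_zero_of_abs_lt_of_isBoundedUnder hq hq2 hs (by simpa using hb)
  intro x
  rcases lt_or_ge (q / (1 - q) - 1) x with hx | hx
  · exact hf.eq_zero_of_sub_one_lt hq hq3 h0 hx
  · simpa using hf.comp_neg.eq_zero_of_sub_one_lt hq hq3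
      (fun y hy => h0 _ ((abs_neg y).trans_lt hy)) (x := -x)
      (by linarith [div_one_sub_lt_one hq2])
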